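/- Let a, b, c, d and a', b', c', d' be real numbers with a·d - b·c = 1 and a'·d' - b'·c' = 1, and let z(t) and z'(t) be the corresponding geodesic curves. Then z(t) = z'(t) for every t ∈ ℝ if and only if (a',b',c',d') = (a,b,c,d) or (a',b',c',d') = (-a,-b,-c,-d). In other words, restricted to matrices of determinant 1, the map from marked translation surfaces to parametrized geodesics of the hyperbolic plane is exactly two-to-one, with fibers {ν, -ν}. -/

import Mathlib

/-!
Multiplying numerator and denominator by `e^{t/2}` gives `z(t) = (a x i + c) / (b x i + d)` with
`x = e^t`. Cross-multiplying, `z(t) = z'(t)` says `cd' - ab'x² = c'd - a'bx²` and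
`ad' + cb' = a'd + c'b`; comparing `x = 1` with `x = 2` gives `ab' = a'b` and `cd' = c'd`.
Together with `ad - bc = 1` these three relations force `ν' = e ν` for `e = a'd - b'c`, and then
`a'd' - b'c' = 1` forces `e² = 1`.
-/

noncomputable section

/-- The projection to the hyperbolic plane of the Teichmüller geodesic through the
marked translation surface determined by the matrix `[[a,b],[c,d]]`. -/
def teichGeodesic (a b c d : ℝ) (t : ℝ) : ℂ :=
  (↑(a * Real.exp (t / 2)) * Complex.I + ↑(c * Real.exp (-t / 2))) /
    (↑(b * Real.exp (t / 2)) * Complex.I + ↑(d * Real.exp (-t / 2)))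

open Complex

lemma teichGeodesic_eq_exp (a b c d t : ℝ) :
    teichGeodesic a b c d t =
      (↑(a * Real.exp t) * I + c) / (↑(b * Real.exp t) * I + d) := by
  have hexp : (Real.exp (t / 2) : ℂ) ≠ 0 := ofReal_ne_zero.mpr (Real.exp_pos _).ne'
  have h₁ : (Real.exp (t / 2) : ℂ) * Real.exp (t / 2) = Real.exp t := by
    rw [← ofReal_mul, ← Real.exp_add, add_halves]
  have h₂ : (Real.exp (-t / 2) : ℂ) * Real.exp (t / 2) = 1 := by
    rw [← ofReal_mul, ← Real.exp_add, neg_div, neg_add_cancel, Real.exp_zero, ofReal_one]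
  rw [teichGeodesic, ← mul_div_mul_right _ _ hexp]
  congr 1 <;> simp only [ofReal_mul]
  · linear_combination (a * I) * h₁ + c * h₂
  · linear_combination (b * I) * h₁ + d * h₂

lemma teichGeodesic_neg (a b c d t : ℝ) :
    teichGeodesic (-a) (-b) (-c) (-d) t = teichGeodesic a b c d t := by
  rw [teichGeodesic, ← neg_div_neg_eq]
  congr 1 <;> push_cast <;> ring

lemma ofReal_mul_I_add_ofReal_eq_zero {x y : ℝ} : (x * I + y : ℂ) = 0 ↔ x = 0 ∧ y = 0 := by
  simp [Complex.ext_iff, and_comm]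

lemma mul_I_add_div_mul_I_add_eq_iff {a b c d a' b' c' d' x : ℝ} (hx : 0 < x)
    (hbd : b ≠ 0 ∨ d ≠ 0) (hbd' : b' ≠ 0 ∨ d' ≠ 0) :
    (↑(a * x) * I + c) / (↑(b * x) * I + d) = (↑(a' * x) * I + c') / (↑(b' * x) * I + d') ↔
      c * d' - a * b' * x ^ 2 = c' * d - a' * b * x ^ 2 ∧
        a * d' + c * b' = a' * d + c' * b := by
  have hden {b d : ℝ} (hbd : b ≠ 0 ∨ d ≠ 0) : (↑(b * x) * I + d : ℂ) ≠ 0 := by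
    rw [Ne, ofReal_mul_I_add_ofReal_eq_zero, mul_eq_zero, or_iff_left hx.ne']
    tauto
  rw [div_eq_div_iff (hden hbd) (hden hbd'), Complex.ext_iff]
  simp only [ofReal_mul, mul_re, add_re, ofReal_re, ofReal_im, mul_zero, sub_zero, I_re, mul_im,
    zero_mul, add_zero, I_im, mul_one, sub_self, zero_add, add_im]
  refine and_congr (by ring_nf) ?_
  rw [show c * (b' * x) + a * x * d' = (a * d' + c * b') * x by ring,
    show c' * (b * x) + a' * x * d = (a' * d + c' * b) * x by ring, mul_left_inj' hx.ne']

lemma ne_zero_or_ne_zero_of_det_eq_one {a b c d : ℝ} (h : a * d - b * c = 1) : b ≠ 0 ∨ d ≠ 0 := by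
  by_contra! ⟨rfl, rfl⟩
  simp at h

lemma eq_or_eq_neg_of_det_eq_one {a b c d a' b' c' d' : ℝ}
    (h : a * d - b * c = 1) (h' : a' * d' - b' * c' = 1)
    (hab : a * b' = a' * b) (hcd : c * d' = c' * d) (hmix : a * d' + c * b' = a' * d + c' * b) :
    (a' = a ∧ b' = b ∧ c' = c ∧ d' = d) ∨ (a' = -a ∧ b' = -b ∧ c' = -c ∧ d' = -d) := by
  set e := a' * d - b' * c
  have ha : a' = e * a := by linear_combination (-a') * h + c * hab
  have hb : b' = e * b := by linear_combination (-b') * h + d * hab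
  have hc : c' = e * c := by linear_combination (-c') * h - a * hcd + c * hmix
  have hd : d' = e * d := by linear_combination (-d') * h - b * hcd + d * hmix
  have he2 : e * e = 1 := by
    linear_combination h' - e * e * h - d' * ha - e * a * hd + c' * hb + e * b * hc
  rcases mul_self_eq_one_iff.mp he2 with he1 | he1 <;>
    simp only [he1, one_mul, neg_one_mul] at ha hb hc hd
  · exact Or.inl ⟨ha, hb, hc, hd⟩
  · exact Or.inr ⟨ha, hb, hc, hd⟩

/-- Restricted to matrices of determinant 1, the map from marked translation surfaces to
parametrized geodesics of the hyperbolic plane is exactly two-to-one, with fibers `{ν, -ν}`. -/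
theorem teichGeodesic_fibers (a b c d a' b' c' d' : ℝ)
    (h : a * d - b * c = 1) (h' : a' * d' - b' * c' = 1) :
    (∀ t : ℝ, teichGeodesic a b c d t = teichGeodesic a' b' c' d' t) ↔
      ((a' = a ∧ b' = b ∧ c' = c ∧ d' = d) ∨
        (a' = -a ∧ b' = -b ∧ c' = -c ∧ d' = -d)) := by
  constructor
  · intro hz
    have cross {x : ℝ} (hx : 0 < x) := by
      have hzx := hz (Real.log x)
      rw [teichGeodesic_eq_exp, teichGeodesic_eq_exp, Real.exp_log hx] at hzx
      exact (mul_I_add_div_mul_I_add_eq_iff hx (ne_zero_or_ne_zero_of_det_eq_one h)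
        (ne_zero_or_ne_zero_of_det_eq_one h')).mp hzx
    obtain ⟨h₁, hmix⟩ := cross one_pos
    obtain ⟨h₂, -⟩ := cross two_pos
    exact eq_or_eq_neg_of_det_eq_one h h' (by linarith) (by linarith) hmix
  · rintro (⟨rfl, rfl, rfl, rfl⟩ | ⟨rfl, rfl, rfl, rfl⟩) t
    · rfl
    · exact (teichGeodesic_neg a b c d t).symm
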